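/- arXiv:1204.5306 — 6 statements merged into one kernel-verified Lean document; each statement's English description precedes it below -/
import Mathlib

section
/- Let q be a subcube of {0,1}^n of dimension d and let c ⊊ q be a subcube of dimension r < d contained in q. Then the set difference q \ c can be partitioned into exactly d - r pairwise disjoint subcubes, one of each dimension r, r+1, ..., d-1. -/
/-- The subcube of `{0,1}^n` obtained by fixing the coordinates in `S` to the values given by `a`. -/
def cube {n : ℕ} (S : Finset (Fin n)) (a : Fin n → Bool) : Set (Fin n → Bool) :=
  {x | ∀ i ∈ S, x i = a i}

/-- A set is a subcube if it arises from some partial assignment. -/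
def IsSubcube {n : ℕ} (A : Set (Fin n → Bool)) : Prop :=
  ∃ (S : Finset (Fin n)) (a : Fin n → Bool), A = cube S a

/-- A set is a subcube of dimension `d` if it arises from a partial assignment fixing `n - d` coordinates. -/
def IsSubcubeDim {n : ℕ} (A : Set (Fin n → Bool)) (d : ℕ) : Prop :=
  ∃ (S : Finset (Fin n)) (a : Fin n → Bool), A = cube S a ∧ S.card = n - d ∧ d ≤ n

/-!
Write `q = cube S a` and `c = cube T b`; then `S ⊆ T` and `a = b` on `S`. Enumerate the free
coordinates of `q` that `c` fixes as `e 0, …, e (d - r - 1)`. A point of `q \ c` disagrees with `b`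
somewhere on them; classifying it by the last such index `k` gives the `k`-th piece: agree with
`b` on `S` and on `e l` for `l > k`, disagree at `e k`. It fixes `|S| + (d - r - k)` coordinates,
so has dimension `r + k`.
-/

namespace Subcube

variable {n : ℕ}

theorem cube_subset_cube_iff {S T : Finset (Fin n)} {a b : Fin n → Bool} :
    cube T b ⊆ cube S a ↔ S ⊆ T ∧ ∀ i ∈ S, b i = a i := by
  constructor
  · intro h
    have hS : S ⊆ T := by
      intro i hiS
      by_contra hiT
      have hflip : Function.update b i (!a i) ∈ cube T b := fun j hj => by
        rw [Function.update_of_ne (ne_of_mem_of_not_mem hj hiT)]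
      simpa using h hflip i hiS
    exact ⟨hS, fun i hi => h (fun _ _ => rfl) i hi⟩
  · rintro ⟨hST, hba⟩ x hx i hi
    rw [hx i (hST hi), hba i hi]

theorem cube_congr {S : Finset (Fin n)} {a b : Fin n → Bool} (h : ∀ i ∈ S, a i = b i) :
    cube S a = cube S b := by
  ext x
  exact forall₂_congr fun i hi => by rw [h i hi]

variable {m : ℕ} (S : Finset (Fin n)) (e : Fin m → Fin n) (b : Fin n → Bool)

def stair (k : Fin m) : Set (Fin n → Bool) :=
  cube (S ∪ (Finset.Ici k).image e) (Function.update b (e k) (!b (e k)))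

variable {S e b}

theorem mem_stair (he : Function.Injective e) (hS : ∀ j, e j ∉ S) {k : Fin m}
    {x : Fin n → Bool} :
    x ∈ stair S e b k ↔
      x ∈ cube S b ∧ x (e k) ≠ b (e k) ∧ ∀ l, k < l → x (e l) = b (e l) := by
  have hcube : (∀ i ∈ S, x i = Function.update b (e k) (!b (e k)) i) ↔ x ∈ cube S b :=
    forall₂_congr fun i hi => by rw [Function.update_of_ne (ne_of_mem_of_not_mem hi (hS k))]
  simp only [stair, cube, Set.mem_ofPred_eq, Finset.forall_mem_union, Finset.forall_mem_image,
    Finset.mem_Ici, hcube]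
  refine and_congr_right fun _ => ⟨fun h => ⟨?_, fun l hl => ?_⟩, ?_⟩
  · exact Bool.eq_not_iff.mp (by simpa using h (le_refl k))
  · simpa [Function.update_of_ne (he.ne hl.ne')] using h hl.le
  · rintro ⟨hk, hgt⟩ l hl
    rcases hl.eq_or_lt with rfl | hlt
    · rw [Function.update_self]
      exact Bool.eq_not_iff.mpr hk
    · rw [Function.update_of_ne (he.ne hlt.ne'), hgt l hlt]

theorem disjoint_stair (he : Function.Injective e) (hS : ∀ j, e j ∉ S) {k l : Fin m}
    (hkl : k ≠ l) : Disjoint (stair S e b k) (stair S e b l) := by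
  wlog hlt : k < l generalizing k l
  · exact (this hkl.symm ((Ne.symm hkl).lt_of_le (not_lt.mp hlt))).symm
  rw [Set.disjoint_left]
  intro x hxk hxl
  exact ((mem_stair he hS).mp hxl).2.1 (((mem_stair he hS).mp hxk).2.2 l hlt)

theorem iUnion_stair (he : Function.Injective e) (hS : ∀ j, e j ∉ S) :
    ⋃ k, stair S e b k = cube S b \ cube (S ∪ Finset.univ.image e) b := by
  ext x
  have hout (hx : x ∈ cube S b) :
      x ∉ cube (S ∪ Finset.univ.image e) b ↔ ∃ j, x (e j) ≠ b (e j) := by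
    simp only [cube, Set.mem_ofPred_eq, Finset.forall_mem_union, Finset.forall_mem_image,
      Finset.mem_univ, forall_const] at hx ⊢
    rw [and_iff_right hx, not_forall]
  simp only [Set.mem_iUnion, Set.mem_sdiff, mem_stair he hS]
  constructor
  · rintro ⟨k, hx, hk, -⟩
    exact ⟨hx, (hout hx).mpr ⟨k, hk⟩⟩
  · rintro ⟨hx, hxc⟩
    obtain ⟨j, hj⟩ := (hout hx).mp hxc
    obtain ⟨k, hk, hmax⟩ := Finset.exists_max_image
      (Finset.univ.filter fun j => x (e j) ≠ b (e j)) id ⟨j, by simpa using hj⟩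
    refine ⟨k, hx, by simpa using hk, fun l hkl => ?_⟩
    by_contra hl
    exact (hmax l (by simpa using hl)).not_gt hkl

theorem card_stair_finset (he : Function.Injective e) (hS : ∀ j, e j ∉ S) (k : Fin m) :
    (S ∪ (Finset.Ici k).image e).card = S.card + (m - k) := by
  rw [Finset.card_union_of_disjoint, Finset.card_image_of_injective _ he, Fin.card_Ici]
  simpa [Finset.disjoint_right] using fun j _ => hS j

theorem isSubcubeDim_stair (he : Function.Injective e) (hS : ∀ j, e j ∉ S) {r : ℕ}
    (hr : S.card + m + r = n) (k : Fin m) : IsSubcubeDim (stair S e b k) (r + k) :=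
  ⟨_, _, rfl, by rw [card_stair_finset he hS]; omega, by omega⟩

theorem exists_enum_sdiff {S T : Finset (Fin n)} (hST : S ⊆ T) (hm : (T \ S).card = m) :
    ∃ e : Fin m → Fin n, Function.Injective e ∧ (∀ j, e j ∉ S) ∧ S ∪ Finset.univ.image e = T := by
  let f := ((T \ S).equivFinOfCardEq hm).symm
  refine ⟨fun j => f j, Subtype.val_injective.comp f.injective,
    fun j => (Finset.mem_sdiff.mp (f j).2).2, ?_⟩
  have himage : Finset.univ.image (fun j => (f j : Fin n)) = T \ S := by
    ext i
    simp only [Finset.mem_image, Finset.mem_univ, true_and]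
    exact ⟨fun ⟨j, hj⟩ => hj ▸ (f j).2, fun hi => ⟨f.symm ⟨i, hi⟩, by simp⟩⟩
  rw [himage, Finset.union_sdiff_of_subset hST]

end Subcube

open Subcube in
/-- q \ c can be partitioned into exactly d - r disjoint subcubes of dimensions r, r+1, ..., d-1. -/
theorem stmt2 (n d r : ℕ) (q c : Set (Fin n → Bool))
    (hq : IsSubcubeDim q d) (hc : IsSubcubeDim c r) (hsub : c ⊂ q) (hrd : r < d) :
    ∃ F : Fin (d - r) → Set (Fin n → Bool),
      (∀ i, IsSubcubeDim (F i) (r + i.1)) ∧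
      (∀ i j, i ≠ j → Disjoint (F i) (F j)) ∧
      (⋃ i, F i) = q \ c := by
  obtain ⟨S, a, rfl, hScard, hdn⟩ := hq
  obtain ⟨T, b, rfl, hTcard, hrn⟩ := hc
  obtain ⟨hST, hba⟩ := cube_subset_cube_iff.mp hsub.subset
  have hcard : (T \ S).card = d - r := by
    rw [Finset.card_sdiff_of_subset hST, hScard, hTcard]
    omega
  obtain ⟨e, he, hS, hT⟩ := exists_enum_sdiff hST hcard
  refine ⟨stair S e b, isSubcubeDim_stair he hS (by omega), fun k l => disjoint_stair he hS, ?_⟩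
  rw [iUnion_stair he hS, hT, cube_congr hba]
end

section
/- Let q be a subcube of {0,1}^n of dimension d and let c ⊊ q be a proper subcube of dimension r contained in q. Then q \ c cannot be written as a union of fewer than d - r pairwise disjoint subcubes. -/
open Finset Function

lemma Nat.length_bitIndices_le_card (s : Multiset ℕ) :
    (s.map (2 ^ ·)).sum.bitIndices.length ≤ Multiset.card s := by
  induction h : Multiset.card s using Nat.strong_induction_on generalizing s with
  | _ N ih =>
  by_cases hs : s.Nodup
  · have : (s.map (2 ^ ·)).sum = ∑ i ∈ ⟨s, hs⟩, 2 ^ i := rfl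
    rw [this, ← List.toFinset_card_of_nodup Nat.bitIndices_nodup,
      Finset.toFinset_bitIndices_sum_two_pow, ← h, Finset.card_mk]
  · obtain ⟨k, t, rfl⟩ : ∃ k t, s = k ::ₘ k ::ₘ t := by
      simpa [Multiset.nodup_iff_ne_cons_cons] using hs
    have merge : (((k + 1) ::ₘ t).map (2 ^ ·)).sum = ((k ::ₘ k ::ₘ t).map (2 ^ ·)).sum := by
      simp only [Multiset.map_cons, Multiset.sum_cons, pow_succ]; ring
    rw [← merge]
    exact (ih _ (by simp [← h]) _ rfl).trans (by simp [← h])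

lemma Nat.sum_Ico_two_pow {r d : ℕ} (h : r ≤ d) : ∑ i ∈ Ico r d, 2 ^ i = 2 ^ d - 2 ^ r := by
  induction d, h using Nat.le_induction with
  | base => simp
  | succ d hrd ih =>
    rw [sum_Ico_succ_top hrd, ih, pow_succ]
    have := Nat.pow_le_pow_right two_pos hrd
    omega

lemma Nat.length_bitIndices_two_pow_sub_two_pow {r d : ℕ} (h : r ≤ d) :
    (2 ^ d - 2 ^ r).bitIndices.length = d - r := by
  rw [← Nat.sum_Ico_two_pow h, ← List.toFinset_card_of_nodup Nat.bitIndices_nodup,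
    Finset.toFinset_bitIndices_sum_two_pow, Nat.card_Ico]

lemma Set.length_bitIndices_ncard_iUnion_le {α ι : Type*} [Fintype ι] {F : ι → Set α}
    (hfin : ∀ i, (F i).Finite) (hdisj : Pairwise (Disjoint on F))
    (hpow : ∀ i, ∃ k, (F i).ncard = 2 ^ k) :
    (⋃ i, F i).ncard.bitIndices.length ≤ Fintype.card ι := by
  choose k hk using hpow
  have hsum : (⋃ i, F i).ncard = ((Finset.univ.val.map k).map (2 ^ ·)).sum := by
    rw [Set.ncard_iUnion_of_finite hfin hdisj, finsum_eq_sum_of_fintype]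
    simp [hk, Multiset.map_map]
  simpa [hsum] using Nat.length_bitIndices_le_card (Finset.univ.val.map k)

lemma ncard_cube {n : ℕ} (S : Finset (Fin n)) (a : Fin n → Bool) :
    (cube S a).ncard = 2 ^ (n - S.card) := by
  have e : cube S a ≃ ({i : Fin n // i ∉ S} → Bool) :=
    { toFun x i := x.1 i
      invFun g := ⟨fun i => if h : i ∈ S then a i else g ⟨i, h⟩, fun i hi => by simp [hi]⟩
      left_inv := fun ⟨x, hx⟩ => by ext i; by_cases h : i ∈ S <;> simp [h, hx i]
      right_inv g := by ext i; simp [i.2] }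
  rw [← Nat.card_coe_set_eq, Nat.card_congr e]
  simp [Fintype.card_subtype_compl]

lemma IsSubcube.exists_ncard_eq_two_pow {n : ℕ} {A : Set (Fin n → Bool)} (h : IsSubcube A) :
    ∃ k, A.ncard = 2 ^ k := by
  obtain ⟨S, a, rfl⟩ := h
  exact ⟨_, ncard_cube S a⟩

lemma IsSubcubeDim.ncard_eq {n d : ℕ} {A : Set (Fin n → Bool)} (h : IsSubcubeDim A d) :
    A.ncard = 2 ^ d := by
  obtain ⟨S, a, rfl, hS, hd⟩ := h
  rw [ncard_cube, hS, Nat.sub_sub_self hd]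

/-- q \ c cannot be written as a union of fewer than d - r pairwise disjoint subcubes. -/
theorem stmt3 (n d r : ℕ) (q c : Set (Fin n → Bool))
    (hq : IsSubcubeDim q d) (hc : IsSubcubeDim c r) (hsub : c ⊂ q) :
    ∀ (m : ℕ) (F : Fin m → Set (Fin n → Bool)),
      (∀ i, IsSubcube (F i)) → (∀ i j, i ≠ j → Disjoint (F i) (F j)) →
      (⋃ i, F i) = q \ c → d - r ≤ m := by
  intro m F hF hdisj hunion
  have hrd : r ≤ d := by
    have := Set.ncard_le_ncard hsub.subset
    rwa [hq.ncard_eq, hc.ncard_eq, Nat.pow_le_pow_iff_right (by norm_num)] at this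
  have hcard : (⋃ i, F i).ncard = 2 ^ d - 2 ^ r := by
    rw [hunion, Set.ncard_sdiff hsub.subset, hq.ncard_eq, hc.ncard_eq]
  have key := Set.length_bitIndices_ncard_iUnion_le (fun i => Set.toFinite (F i))
    (fun i j => hdisj i j) (fun i => (hF i).exists_ncard_eq_two_pow)
  rwa [hcard, Nat.length_bitIndices_two_pow_sub_two_pow hrd, Fintype.card_fin] at key
end

section
/- For every k ≥ 1, the Boolean function f on n = 2k variables defined by f(x) = 1 iff x_{2i-1} = x_{2i} = 1 for some i ∈ {1,...,k}, has a SOP cover with k cubes (the products x_{2i-1} x_{2i}), but every DSOP of f contains at least 2^k - 1 cubes. -/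
/-!
On the points `(y₀, z₀, y₁, z₁, …)` of `{0,1}^(2k)`, every subcube becomes a combinatorial
rectangle `A × B ⊆ {0,1}^k × {0,1}^k`, and `f` becomes the intersection relation
`∃ t, y t ∧ z t`. A DSOP with `m` cubes therefore partitions the intersecting pairs into `m`
rectangles, which writes the disjointness matrix as the all-ones matrix minus `m` rank-one
matrices. The disjointness matrix is the `k`-th Kronecker power of `!![1, 1; 1, 0]`, hence
invertible of rank `2^k`, so `2^k ≤ m + 1`.
-/

open Matrix Set

section DisjointnessMatrix

variable (R : Type*) [CommRing R] (ι : Type*) [Fintype ι]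

def disjointnessMatrix : Matrix (ι → Bool) (ι → Bool) R :=
  of fun y z => ∏ t, if y t && z t then 0 else 1

/-- The `|ι|`-fold Kronecker power of `!![0, 1; 1, -1] = !![1, 1; 1, 0]⁻¹`. -/
def disjointnessMatrixInv : Matrix (ι → Bool) (ι → Bool) R :=
  of fun y z => ∏ t, if y t then (if z t then -1 else 1) else (if z t then 1 else 0)

variable {R ι}

lemma disjointnessMatrix_apply (y z : ι → Bool) :
    disjointnessMatrix R ι y z = if ∃ t, y t = true ∧ z t = true then 0 else 1 := by
  split_ifs with h
  · obtain ⟨t, hy, hz⟩ := h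
    exact Finset.prod_eq_zero (Finset.mem_univ t) (by simp [hy, hz])
  · refine Finset.prod_eq_one fun t _ => ?_
    cases hy : y t <;> cases hz : z t <;> simp_all

variable [DecidableEq ι]

lemma disjointnessMatrix_mul_inv :
    disjointnessMatrix R ι * disjointnessMatrixInv R ι = 1 := by
  ext y z
  let f : ι → Bool → R := fun t b =>
    (if y t && b then 0 else 1) * (if b then (if z t then -1 else 1) else (if z t then 1 else 0))
  calc (disjointnessMatrix R ι * disjointnessMatrixInv R ι) y z
      = ∑ w : ι → Bool, ∏ t, f t (w t) := by
        simp only [f, mul_apply, disjointnessMatrix, disjointnessMatrixInv, of_apply,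
          Finset.prod_mul_distrib]
    _ = ∏ t, ∑ b, f t b := (Fintype.prod_sum f).symm
    _ = ∏ t, if y t = z t then 1 else 0 := by
        refine Finset.prod_congr rfl fun t _ => ?_
        cases hy : y t <;> cases hz : z t <;> simp [f, hy, hz]
    _ = (1 : Matrix (ι → Bool) (ι → Bool) R) y z := by
        rw [one_apply]
        split_ifs with h
        · simp [h]
        · obtain ⟨t, ht⟩ := Function.ne_iff.1 h
          exact Finset.prod_eq_zero (Finset.mem_univ t) (if_neg ht)

lemma rank_disjointnessMatrix [StrongRankCondition R] :
    (disjointnessMatrix R ι).rank = 2 ^ Fintype.card ι := by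
  rw [rank_of_isUnit _ ((isUnit_iff_isUnit_det _).2
    (isUnit_det_of_right_inverse disjointnessMatrix_mul_inv))]
  simp

theorem two_pow_card_le_of_rectangle_partition {κ : Type*} [Fintype κ]
    (A B : κ → Set (ι → Bool)) (hdisj : Pairwise fun i j => Disjoint (A i ×ˢ B i) (A j ×ˢ B j))
    (hunion : ⋃ i, A i ×ˢ B i = {p | ∃ t, p.1 t = true ∧ p.2 t = true}) :
    2 ^ Fintype.card ι ≤ Fintype.card κ + 1 := by
  let U : Matrix (ι → Bool) (Option κ) ℤ := of fun y o => o.elim 1 fun i => (A i).indicator 1 y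
  let V : Matrix (Option κ) (ι → Bool) ℤ := of fun o z => o.elim 1 fun i => -(B i).indicator 1 z
  have hUV : disjointnessMatrix ℤ ι = U * V := by
    ext y z
    have hsum := Finset.indicator_biUnion_apply Finset.univ (fun i => A i ×ˢ B i)
      (f := (1 : (ι → Bool) × (ι → Bool) → ℤ)) (fun i _ j _ hij => hdisj hij) (y, z)
    simp only [Finset.mem_univ, iUnion_true, hunion, indicator_prod_one] at hsum
    rw [disjointnessMatrix_apply, mul_apply, Fintype.sum_option]
    simp only [U, V, of_apply, Option.elim, mul_neg, Finset.sum_neg_distrib, ← hsum]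
    split_ifs with h <;> simp [h]
  calc 2 ^ Fintype.card ι = (U * V).rank := by rw [← hUV, rank_disjointnessMatrix]
    _ ≤ U.rank := rank_mul_le_left U V
    _ ≤ Fintype.card (Option κ) := rank_le_card_width U
    _ = Fintype.card κ + 1 := Fintype.card_option

end DisjointnessMatrix

section Interleave

variable {k : ℕ}

def evenIdx (i : Fin k) : Fin (2 * k) := ⟨2 * i, by omega⟩

def oddIdx (i : Fin k) : Fin (2 * k) := ⟨2 * i + 1, by omega⟩

def interleave (y z : Fin k → Bool) : Fin (2 * k) → Bool := fun j =>
  if j.1 % 2 = 0 then y ⟨j / 2, by omega⟩ else z ⟨j / 2, by omega⟩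

@[simp]
lemma interleave_evenIdx (y z : Fin k → Bool) (i : Fin k) : interleave y z (evenIdx i) = y i := by
  simp [interleave, evenIdx]

@[simp]
lemma interleave_oddIdx (y z : Fin k → Bool) (i : Fin k) : interleave y z (oddIdx i) = z i := by
  have : (2 * i.1 + 1) / 2 = i := by omega
  simp [interleave, oddIdx, Nat.add_mod, this]

lemma forall_fin_two_mul_iff {P : Fin (2 * k) → Prop} :
    (∀ j, P j) ↔ (∀ i, P (evenIdx i)) ∧ ∀ i, P (oddIdx i) := by
  refine ⟨fun h => ⟨fun i => h _, fun i => h _⟩, fun ⟨hev, hod⟩ j => ?_⟩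
  rcases Nat.even_or_odd' j.1 with ⟨i, hi | hi⟩
  · simpa [evenIdx, ← hi] using hev ⟨i, by omega⟩
  · simpa [oddIdx, ← hi] using hod ⟨i, by omega⟩

lemma preimage_interleave_cube (S : Finset (Fin (2 * k))) (a : Fin (2 * k) → Bool) :
    Function.uncurry interleave ⁻¹' cube S a =
      {y | ∀ i, evenIdx i ∈ S → y i = a (evenIdx i)} ×ˢ
        {z | ∀ i, oddIdx i ∈ S → z i = a (oddIdx i)} := by
  ext ⟨y, z⟩
  simp only [cube, mem_preimage, Function.uncurry_apply_pair, mem_ofPred_eq, mem_prod]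
  exact forall_fin_two_mul_iff.trans (by simp only [interleave_evenIdx, interleave_oddIdx])

lemma IsSubcube.exists_preimage_interleave_eq_prod {C : Set (Fin (2 * k) → Bool)}
    (hC : IsSubcube C) : ∃ A B, Function.uncurry interleave ⁻¹' C = A ×ˢ B := by
  obtain ⟨S, a, rfl⟩ := hC
  exact ⟨_, _, preimage_interleave_cube S a⟩

end Interleave

lemma isSubcube_setOf_and {n : ℕ} (j j' : Fin n) :
    IsSubcube {x : Fin n → Bool | x j = true ∧ x j' = true} :=
  ⟨{j, j'}, fun _ => true, by ext x; simp [cube]⟩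

def pairOnset (k : ℕ) : Set (Fin (2 * k) → Bool) :=
  {x | ∃ i, x (evenIdx i) = true ∧ x (oddIdx i) = true}

lemma preimage_interleave_pairOnset (k : ℕ) :
    Function.uncurry interleave ⁻¹' pairOnset k = {p | ∃ t, p.1 t = true ∧ p.2 t = true} := by
  ext ⟨y, z⟩
  simp [pairOnset]

theorem two_pow_sub_one_le_of_disjoint_subcube_cover {k m : ℕ}
    (F : Fin m → Set (Fin (2 * k) → Bool)) (hF : ∀ i, IsSubcube (F i))
    (hdisj : ∀ i j, i ≠ j → Disjoint (F i) (F j)) (hunion : ⋃ i, F i = pairOnset k) :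
    2 ^ k - 1 ≤ m := by
  choose A B hAB using fun i => (hF i).exists_preimage_interleave_eq_prod
  have := two_pow_card_le_of_rectangle_partition A B
    (fun i j hij => by simpa only [hAB] using (hdisj i j hij).preimage (Function.uncurry interleave))
    (by rw [← preimage_interleave_pairOnset, ← hunion, preimage_iUnion]; simp only [hAB])
  simp only [Fintype.card_fin] at this
  omega

/-- The function ⋁ᵢ x_{2i} x_{2i+1} has a SOP with k cubes but every DSOP has ≥ 2^k - 1 cubes. -/
theorem stmt7 (k : ℕ) :
    ∃ onset : Set (Fin (2 * k) → Bool),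
      onset = {x | ∃ i : Fin k,
        x ⟨2 * i.1, by have := i.2; omega⟩ = true ∧ x ⟨2 * i.1 + 1, by have := i.2; omega⟩ = true} ∧
      (∃ F : Fin k → Set (Fin (2 * k) → Bool),
        (∀ i : Fin k, F i = {x | x ⟨2 * i.1, by have := i.2; omega⟩ = true ∧
            x ⟨2 * i.1 + 1, by have := i.2; omega⟩ = true}) ∧
        (∀ i, IsSubcube (F i)) ∧ (⋃ i, F i) = onset) ∧
      (∀ (m : ℕ) (F : Fin m → Set (Fin (2 * k) → Bool)),
        (∀ i, IsSubcube (F i)) → (∀ i j, i ≠ j → Disjoint (F i) (F j)) →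
        (⋃ i, F i) = onset → 2 ^ k - 1 ≤ m) := by
  refine ⟨pairOnset k, rfl, ⟨_, fun _ => rfl, fun i => isSubcube_setOf_and _ _, ?_⟩,
    fun m F => two_pow_sub_one_le_of_disjoint_subcube_cover F⟩
  ext x
  simp [pairOnset, evenIdx, oddIdx]
end

section
/- With the setup of the 3D-matching reduction (b injective with all b(i) of weight q/2, v^(i) and w^(A) as defined), if C and D are two distinct members of a subcollection 𝒞 ⊆ S that forms an exact cover of {1,...,n} (every element is in exactly one member of 𝒞), then no vector v^(j), j ∈ {1,...,n}, lies in D(w^(C)) ∩ D(w^(D)). In other words, the cubes τ(w^(C)) and τ(w^(D)) intersect only in points outside the set V = {v^(1),...,v^(n)}. -/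
/-!
If `v j ≤ w A` for a triple `A` with one element per block, let `i` be the element of `A` in the
block of `j`. On that block `w A` coincides with `b i`, so `b j ≤ b i` bitwise; both have weight
`q / 2`, hence `b j = b i`, and injectivity of `b` gives `j = i ∈ A`. So `j` lies in both `C` and
`D`, contradicting that an exact cover has a unique member through `j`.
-/

open Finset

lemma Bool.funext_of_le_of_card_filter_eq {α : Type*} [Fintype α] {f g : α → Bool}
    (hle : ∀ t, f t ≤ g t) (hcard : #{t | f t = true} = #{t | g t = true}) : f = g := by
  have hsub : univ.filter (fun t => f t = true) ⊆ univ.filter (fun t => g t = true) :=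
    monotone_filter_right _ fun t _ => hle t
  have heq := eq_of_subset_of_card_le hsub hcard.ge
  funext t
  simpa using congrArg (t ∈ ·) heq

section BlockEncoding

variable {ι κ β : Type*} [DecidableEq κ] {π : ι → κ} {b : ι → β → Bool}
  {v : ι → κ × β → Bool} {w : Finset ι → κ × β → Bool}

lemma apply_le_of_forall_le_of_filter_eq_singleton
    (hv : ∀ i p, v i p = if p.1 = π i then b i p.2 else false)
    (hw : ∀ A p, w A p = true ↔ ∃ i ∈ A, v i p = true)
    {A : Finset ι} {i j : ι} (hAi : A.filter (fun l => π l = π j) = {i})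
    (hj : ∀ p, v j p ≤ w A p) (t : β) : b j t ≤ b i t := by
  cases hbj : b j t
  · exact Bool.false_le _
  have hwA : w A (π j, t) = true := hj (π j, t) (by simp [hv, hbj])
  obtain ⟨l, hlA, hvl⟩ := (hw A (π j, t)).mp hwA
  have hπl : π l = π j := by
    by_contra h
    simp [hv, Ne.symm h] at hvl
  have hli : l = i := mem_singleton.mp (hAi ▸ mem_filter.mpr ⟨hlA, hπl⟩)
  subst hli
  intro
  simpa [hv, hπl] using hvl

lemma mem_of_forall_le [Fintype β]
    (hv : ∀ i p, v i p = if p.1 = π i then b i p.2 else false)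
    (hw : ∀ A p, w A p = true ↔ ∃ i ∈ A, v i p = true)
    (hb : Function.Injective b) {m : ℕ} (hbw : ∀ i, #{t | b i t = true} = m)
    {A : Finset ι} (hA : ∀ k, (A.filter (fun l => π l = k)).card = 1)
    {j : ι} (hj : ∀ p, v j p ≤ w A p) : j ∈ A := by
  obtain ⟨i, hAi⟩ := card_eq_one.mp (hA (π j))
  have hbji : b j = b i := Bool.funext_of_le_of_card_filter_eq
    (apply_le_of_forall_le_of_filter_eq_singleton hv hw hAi hj) (by rw [hbw, hbw])
  have hiA : i ∈ A := (mem_filter.mp (hAi ▸ mem_singleton_self i)).1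
  rwa [hb hbji]

end BlockEncoding

theorem stmt13_general (n q : ℕ)
    (π : Fin n → Fin 3)
    (b : Fin n → Fin q → Bool) (hb : Function.Injective b)
    (hbw : ∀ i, (Finset.univ.filter (fun t => b i t = true)).card = q / 2)
    (S : Finset (Finset (Fin n)))
    (hS : ∀ A ∈ S, ∀ blk : Fin 3, (A.filter (fun i => π i = blk)).card = 1)
    (v : Fin n → Fin 3 × Fin q → Bool)
    (hv : ∀ i p, v i p = if p.1 = π i then b i p.2 else false)
    (w : Finset (Fin n) → Fin 3 × Fin q → Bool)
    (hw : ∀ A p, w A p = true ↔ ∃ i ∈ A, v i p = true)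
    (𝒞 : Finset (Finset (Fin n))) (h𝒞S : 𝒞 ⊆ S)
    (hcover : ∀ i : Fin n, ∃! A, A ∈ 𝒞 ∧ i ∈ A) :
    ∀ C ∈ 𝒞, ∀ D ∈ 𝒞, C ≠ D → ∀ j : Fin n,
      ¬ ((∀ p, v j p ≤ w C p) ∧ (∀ p, v j p ≤ w D p)) := by
  intro C hC D hD hCD j ⟨hjC, hjD⟩
  have hmem : ∀ A ∈ 𝒞, (∀ p, v j p ≤ w A p) → j ∈ A := fun A hA =>
    mem_of_forall_le hv hw hb hbw (hS A (h𝒞S hA))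
  exact hCD <| (hcover j).unique ⟨hC, hmem C hC hjC⟩ ⟨hD, hmem D hD hjD⟩

/-- In the 3D-matching reduction setup below:
* \`π\` assigns each element of {1,…,n} to one of three equal-size blocks,
* \`b\` is an injective encoding by q-bit vectors of weight q/2,
* \`S\` collects 3-sets with exactly one element per block,
* \`v i\` puts \`b i\` in block \`π i\` of {0,1}^{3q} (zero elsewhere),
* \`w A\` is the bitwise OR of the \`v i\`, i ∈ A. -/
theorem stmt13 (n q : ℕ) (hn : 3 ∣ n) (hq : Even q)
    (π : Fin n → Fin 3)
    (hπ : ∀ blk : Fin 3, (Finset.univ.filter (fun i => π i = blk)).card = n / 3)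
    (b : Fin n → Fin q → Bool) (hb : Function.Injective b)
    (hbw : ∀ i, (Finset.univ.filter (fun t => b i t = true)).card = q / 2)
    (S : Finset (Finset (Fin n)))
    (hS : ∀ A ∈ S, ∀ blk : Fin 3, (A.filter (fun i => π i = blk)).card = 1)
    (v : Fin n → Fin 3 × Fin q → Bool)
    (hv : ∀ i p, v i p = if p.1 = π i then b i p.2 else false)
    (w : Finset (Fin n) → Fin 3 × Fin q → Bool)
    (hw : ∀ A p, w A p = true ↔ ∃ i ∈ A, v i p = true)
    (𝒞 : Finset (Finset (Fin n))) (h𝒞S : 𝒞 ⊆ S)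
    (hcover : ∀ i : Fin n, ∃! A, A ∈ 𝒞 ∧ i ∈ A) :
    ∀ C ∈ 𝒞, ∀ D ∈ 𝒞, C ≠ D → ∀ j : Fin n,
      ¬ ((∀ p, v j p ≤ w C p) ∧ (∀ p, v j p ≤ w D p)) :=
  stmt13_general n q π b hb hbw S hS v hv w hw 𝒞 h𝒞S hcover
end

section
/- With the setup of the 3D-matching reduction, if 𝒞 ⊆ S is an exact cover of {1,...,n} of size n/3, then the map sending each v^(j) to the unique C ∈ 𝒞 with j ∈ C is well-defined and v^(j) ∈ D(w^(C)) for that C; hence the family of cubes { D(w^(C)) : C ∈ 𝒞 } covers every v^(j), j ∈ {1,...,n}, exactly once. -/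
/-!
A set `C` of the cover contributes to block `π j` only through its unique element `i₀` there, so
`v j ≤ w C` forces `b j ≤ b i₀`. Two codewords of the same weight, one below the other, are equal,
and `b` is injective, hence `j = i₀ ∈ C`. Thus the cubes containing `v j` are exactly those of the
sets containing `j`, and an exact cover yields exactly one of them.
-/

open Finset

theorem eq_of_le_of_card_filter_true_eq {α : Type*} [Fintype α] {f g : α → Bool}
    (hle : f ≤ g) (hcard : #(univ.filter (f · = true)) = #(univ.filter (g · = true))) :
    f = g := by
  have hsub : univ.filter (f · = true) ⊆ univ.filter (g · = true) := fun t ht => by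
    simp only [mem_filter_univ] at ht ⊢
    exact Bool.le_iff_imp.mp (hle t) ht
  have heq := eq_of_subset_of_card_le hsub hcard.ge
  funext t
  have ht := Finset.ext_iff.mp heq t
  simp only [mem_filter_univ] at ht
  exact Bool.eq_iff_iff.mpr ht

section Encoding

variable {n q : ℕ} {π : Fin n → Fin 3} {b : Fin n → Fin q → Bool}
  {v : Fin n → Fin 3 × Fin q → Bool} {w : Finset (Fin n) → Fin 3 × Fin q → Bool}

theorem le_sup_of_mem (hw : ∀ A p, w A p = true ↔ ∃ i ∈ A, v i p = true)
    {j : Fin n} {C : Finset (Fin n)} (hj : j ∈ C) : v j ≤ w C := fun p =>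
  Bool.le_iff_imp.mpr fun hvj => (hw C p).2 ⟨j, hj, hvj⟩

theorem code_le_of_le_sup (hv : ∀ i p, v i p = if p.1 = π i then b i p.2 else false)
    (hw : ∀ A p, w A p = true ↔ ∃ i ∈ A, v i p = true)
    {j i₀ : Fin n} {C : Finset (Fin n)} (hC : C.filter (fun i => π i = π j) = {i₀})
    (hle : v j ≤ w C) : b j ≤ b i₀ := fun t => Bool.le_iff_imp.mpr fun hbj => by
  have hvj : v j (π j, t) = true := by simpa [hv] using hbj
  obtain ⟨i, hiC, hvi⟩ := (hw C (π j, t)).1 (Bool.le_iff_imp.mp (hle _) hvj)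
  by_cases hπi : π i = π j
  · have hi : i = i₀ := mem_singleton.mp (hC ▸ mem_filter.mpr ⟨hiC, hπi⟩)
    subst hi
    simpa [hv, hπi] using hvi
  · simp [hv, Ne.symm hπi] at hvi

theorem mem_of_le_sup {k : ℕ} (hb : Function.Injective b)
    (hbw : ∀ i, #(univ.filter (fun t => b i t = true)) = k)
    (hv : ∀ i p, v i p = if p.1 = π i then b i p.2 else false)
    (hw : ∀ A p, w A p = true ↔ ∃ i ∈ A, v i p = true)
    {j : Fin n} {C : Finset (Fin n)} (hC : #(C.filter (fun i => π i = π j)) = 1)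
    (hle : v j ≤ w C) : j ∈ C := by
  obtain ⟨i₀, hi₀⟩ := card_eq_one.mp hC
  have hcode : b j = b i₀ :=
    eq_of_le_of_card_filter_true_eq (code_le_of_le_sup hv hw hi₀ hle) (by rw [hbw, hbw])
  rw [hb hcode]
  exact (mem_filter.mp (hi₀ ▸ mem_singleton_self i₀)).1

end Encoding

theorem stmt14_general (n q : ℕ)
    (π : Fin n → Fin 3)
    (b : Fin n → Fin q → Bool) (hb : Function.Injective b)
    (hbw : ∀ i, (Finset.univ.filter (fun t => b i t = true)).card = q / 2)
    (S : Finset (Finset (Fin n)))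
    (hS : ∀ A ∈ S, ∀ blk : Fin 3, (A.filter (fun i => π i = blk)).card = 1)
    (v : Fin n → Fin 3 × Fin q → Bool)
    (hv : ∀ i p, v i p = if p.1 = π i then b i p.2 else false)
    (w : Finset (Fin n) → Fin 3 × Fin q → Bool)
    (hw : ∀ A p, w A p = true ↔ ∃ i ∈ A, v i p = true)
    (𝒞 : Finset (Finset (Fin n))) (h𝒞S : 𝒞 ⊆ S)
    (hcover : ∀ i : Fin n, ∃! A, A ∈ 𝒞 ∧ i ∈ A) :
    (∀ j : Fin n, ∀ C, (C ∈ 𝒞 ∧ j ∈ C) → ∀ p, v j p ≤ w C p) ∧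
    (∀ j : Fin n, ∃! C, C ∈ 𝒞 ∧ ∀ p, v j p ≤ w C p) := by
  refine ⟨fun j C hC => le_sup_of_mem hw hC.2, fun j => ?_⟩
  obtain ⟨A, ⟨hA𝒞, hjA⟩, huniq⟩ := hcover j
  refine ⟨A, ⟨hA𝒞, le_sup_of_mem hw hjA⟩, fun C ⟨hC𝒞, hle⟩ => huniq C ⟨hC𝒞, ?_⟩⟩
  exact mem_of_le_sup hb hbw hv hw (hS C (h𝒞S hC𝒞) (π j)) hle

/-- In the 3D-matching reduction setup below:
* \`π\` assigns each element of {1,…,n} to one of three equal-size blocks,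
* \`b\` is an injective encoding by q-bit vectors of weight q/2,
* \`S\` collects 3-sets with exactly one element per block,
* \`v i\` puts \`b i\` in block \`π i\` of {0,1}^{3q} (zero elsewhere),
* \`w A\` is the bitwise OR of the \`v i\`, i ∈ A. -/
theorem stmt14 (n q : ℕ) (hn : 3 ∣ n) (hq : Even q)
    (π : Fin n → Fin 3)
    (hπ : ∀ blk : Fin 3, (Finset.univ.filter (fun i => π i = blk)).card = n / 3)
    (b : Fin n → Fin q → Bool) (hb : Function.Injective b)
    (hbw : ∀ i, (Finset.univ.filter (fun t => b i t = true)).card = q / 2)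
    (S : Finset (Finset (Fin n)))
    (hS : ∀ A ∈ S, ∀ blk : Fin 3, (A.filter (fun i => π i = blk)).card = 1)
    (v : Fin n → Fin 3 × Fin q → Bool)
    (hv : ∀ i p, v i p = if p.1 = π i then b i p.2 else false)
    (w : Finset (Fin n) → Fin 3 × Fin q → Bool)
    (hw : ∀ A p, w A p = true ↔ ∃ i ∈ A, v i p = true)
    (𝒞 : Finset (Finset (Fin n))) (h𝒞S : 𝒞 ⊆ S)
    (hcover : ∀ i : Fin n, ∃! A, A ∈ 𝒞 ∧ i ∈ A)
    (hsize : 𝒞.card = n / 3) :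
    (∀ j : Fin n, ∀ C, (C ∈ 𝒞 ∧ j ∈ C) → ∀ p, v j p ≤ w C p) ∧
    (∀ j : Fin n, ∃! C, C ∈ 𝒞 ∧ ∀ p, v j p ≤ w C p) :=
  stmt14_general n q π b hb hbw S hS v hv w hw 𝒞 h𝒞S hcover
end

section
/- Let p1 and p2 be subcubes of {0,1}^n with p1 ∩ p2 ≠ ∅ and p2 ⊄ p1, where p1 fixes k1 coordinates and p1, p2 have exactly c commonly fixed coordinates. Then the minimum number of pairwise disjoint subcubes needed to partition p2 \ p1 equals k1 - c; consequently the weight w(p1/p2) := k1 - c - 1 equals the number of extra cubes (beyond the single cube p2) needed to cover p2 \ p1 disjointly. -/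
/-!
Pick `x ∈ p1 ∩ p2`. Then `p1 = cube S1 x`, `p2 = cube S2 x`, and
`p2 \ p1 = cube S2 x \ cube R x` with `R = S1 \ S2`, `|R| = k1 - c`.

Listing `R` as `r₀ < ⋯ < r_{k-1}`, the points of `p2 \ p1` whose first disagreement with `x`
on `R` is at `r_j` form a subcube, and these `|R|` staircase pieces partition `p2 \ p1`.

Conversely, flipping `x` at one coordinate of `R` gives `|R|` points of `p2 \ p1`. A subcube that
avoids `x` but contains the flip of `x` at `r` must fix the coordinate `r`, so no piece of a
subcube partition of `p2 \ p1` contains two of these points.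
-/

open Finset

section

variable {n : ℕ}

def flipCoord (x : Fin n → Bool) (i : Fin n) : Fin n → Bool :=
  Function.update x i (!x i)

lemma flipCoord_apply_self (x : Fin n → Bool) (i : Fin n) : flipCoord x i i = !x i :=
  Function.update_self ..

lemma flipCoord_apply_of_ne (x : Fin n → Bool) {i j : Fin n} (h : j ≠ i) :
    flipCoord x i j = x j :=
  Function.update_of_ne h ..

lemma self_mem_cube (S : Finset (Fin n)) (x : Fin n → Bool) : x ∈ cube S x :=
  fun _ _ => rfl

lemma cube_eq_of_mem {S : Finset (Fin n)} {a x : Fin n → Bool} (hx : x ∈ cube S a) :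
    cube S x = cube S a := by
  ext y
  exact forall₂_congr fun i hi => by rw [hx i hi]

lemma cube_inter_cube_eq_inter_cube_sdiff (S R : Finset (Fin n)) (x : Fin n → Bool) :
    cube S x ∩ cube R x = cube S x ∩ cube (R \ S) x := by
  ext y
  simp only [Set.mem_inter_iff, cube, Set.mem_ofPred_eq, mem_sdiff]
  exact and_congr_right fun hS =>
    ⟨fun hR i hi => hR i hi.1, fun hR i hi => if h : i ∈ S then hS i h else hR i ⟨hi, h⟩⟩

lemma flipCoord_mem_cube_sdiff {S R : Finset (Fin n)} (x : Fin n → Bool) {t : Fin n}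
    (htS : t ∉ S) (htR : t ∈ R) : flipCoord x t ∈ cube S x \ cube R x := by
  refine ⟨fun i hi => flipCoord_apply_of_ne x (ne_of_mem_of_not_mem hi htS), fun h => ?_⟩
  exact Bool.not_ne_self _ ((flipCoord_apply_self x t).symm.trans (h t htR))

lemma eq_of_flipCoord_mem {A : Set (Fin n → Bool)} (hA : IsSubcube A) {x : Fin n → Bool}
    (hx : x ∉ A) {t t' : Fin n} (ht : flipCoord x t ∈ A) (ht' : flipCoord x t' ∈ A) :
    t = t' := by
  obtain ⟨S, b, rfl⟩ := hA
  obtain ⟨l, hlS, hl⟩ : ∃ l ∈ S, x l ≠ b l := by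
    by_contra! h
    exact hx h
  have fixed_of_mem : ∀ s, flipCoord x s ∈ cube S b → l = s := fun s hs => by
    by_contra h
    exact hl ((flipCoord_apply_of_ne x h).symm.trans (hs l hlS))
  exact (fixed_of_mem t ht).symm.trans (fixed_of_mem t' ht')

lemma card_le_of_flipCoord_mem {m : ℕ} {F : Fin m → Set (Fin n → Bool)}
    (hF : ∀ i, IsSubcube (F i)) {x : Fin n → Bool} (hx : ∀ i, x ∉ F i) (T : Finset (Fin n))
    (hT : ∀ t ∈ T, ∃ i, flipCoord x t ∈ F i) : #T ≤ m := by
  choose g hg using fun t : T => hT t t.2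
  have hg_inj : Function.Injective g := fun t t' h =>
    Subtype.ext (eq_of_flipCoord_mem (hF _) (hx _) (hg t) (h ▸ hg t'))
  simpa using Fintype.card_le_of_injective g hg_inj

def staircaseCube {k : ℕ} (S : Finset (Fin n)) (x : Fin n → Bool) (e : Fin k → Fin n)
    (j : Fin k) : Set (Fin n → Bool) :=
  cube (S ∪ (Iic j).image e) (flipCoord x (e j))

variable {k : ℕ} {S : Finset (Fin n)} {x : Fin n → Bool} {e : Fin k → Fin n}

lemma mem_staircaseCube_iff (hS : ∀ j, e j ∉ S) (he : Function.Injective e) (j : Fin k)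
    (y : Fin n → Bool) :
    y ∈ staircaseCube S x e j ↔
      y ∈ cube S x ∧ (∀ i < j, y (e i) = x (e i)) ∧ y (e j) ≠ x (e j) := by
  have hSj : ∀ l ∈ S, l ≠ e j := fun l hl h => hS j (h ▸ hl)
  have hIic : ∀ {i}, i ≤ j → e i ∈ S ∪ (Iic j).image e := fun hi =>
    mem_union_right _ (mem_image_of_mem e (mem_Iic.2 hi))
  constructor
  · intro h
    refine ⟨fun l hl => ?_, fun i hi => ?_, ?_⟩
    · rw [h l (mem_union_left _ hl), flipCoord_apply_of_ne x (hSj l hl)]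
    · rw [h (e i) (hIic hi.le), flipCoord_apply_of_ne x (he.ne hi.ne)]
    · rw [h (e j) (hIic le_rfl), flipCoord_apply_self]
      exact Bool.not_ne_self _
  · rintro ⟨hyS, hlt, hj⟩ l hl
    rcases mem_union.1 hl with hl | hl
    · rw [flipCoord_apply_of_ne x (hSj l hl), hyS l hl]
    · obtain ⟨i, hi, rfl⟩ := mem_image.1 hl
      rcases (mem_Iic.1 hi).lt_or_eq with hi | rfl
      · rw [flipCoord_apply_of_ne x (he.ne hi.ne), hlt i hi]
      · rw [flipCoord_apply_self]
        exact Bool.eq_not.2 hj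

lemma pairwise_disjoint_staircaseCube (hS : ∀ j, e j ∉ S) (he : Function.Injective e) :
    Pairwise fun i j => Disjoint (staircaseCube S x e i) (staircaseCube S x e j) := by
  refine (pairwise_disjoint_on _).2 fun i j hij => Set.disjoint_left.2 fun y hi hj => ?_
  rw [mem_staircaseCube_iff hS he] at hi hj
  exact hi.2.2 (hj.2.1 i hij)

lemma iUnion_staircaseCube (hS : ∀ j, e j ∉ S) (he : Function.Injective e) :
    ⋃ j, staircaseCube S x e j = cube S x \ cube (univ.image e) x := by
  ext y
  simp only [Set.mem_iUnion, mem_staircaseCube_iff hS he]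
  constructor
  · rintro ⟨j, hyS, -, hj⟩
    exact ⟨hyS, fun h => hj (h (e j) (mem_image_of_mem e (mem_univ j)))⟩
  · rintro ⟨hyS, hyR⟩
    have hne : {j | y (e j) ≠ x (e j)}.Nonempty := by
      by_contra! h
      exact hyR fun l hl => by
        obtain ⟨j, -, rfl⟩ := mem_image.1 hl
        by_contra hj
        exact h.subset hj
    obtain ⟨j, hj, hmin⟩ := wellFounded_lt.has_min _ hne
    exact ⟨j, hyS, fun i hi => not_not.1 fun h => hmin i h hi, hj⟩

variable (x) in
lemma exists_partition_cube_sdiff {R : Finset (Fin n)} (hSR : Disjoint S R) :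
    ∃ F : Fin #R → Set (Fin n → Bool), (∀ i, IsSubcube (F i)) ∧
      (∀ i j, i ≠ j → Disjoint (F i) (F j)) ∧ ⋃ i, F i = cube S x \ cube R x := by
  have hS : ∀ j, R.orderEmbOfFin rfl j ∉ S := fun j =>
    disjoint_right.1 hSR (R.orderEmbOfFin_mem rfl j)
  have he : Function.Injective (R.orderEmbOfFin rfl) := (R.orderEmbOfFin rfl).injective
  refine ⟨staircaseCube S x (R.orderEmbOfFin rfl), fun j => ⟨_, _, rfl⟩,
    fun _ _ hij => pairwise_disjoint_staircaseCube hS he hij, ?_⟩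
  rw [iUnion_staircaseCube hS he, image_orderEmbOfFin_univ]

variable (x) in
theorem isLeast_card_partition_cube_sdiff {R : Finset (Fin n)} (hSR : Disjoint S R) :
    IsLeast {m : ℕ | ∃ F : Fin m → Set (Fin n → Bool), (∀ i, IsSubcube (F i)) ∧
      (∀ i j, i ≠ j → Disjoint (F i) (F j)) ∧ ⋃ i, F i = cube S x \ cube R x} #R := by
  refine ⟨exists_partition_cube_sdiff x hSR, ?_⟩
  rintro m ⟨F, hF, -, hunion⟩
  have hx : ∀ i, x ∉ F i := fun i hi =>
    (hunion ▸ Set.mem_iUnion_of_mem i hi : x ∈ cube S x \ cube R x).2 (self_mem_cube R x)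
  refine card_le_of_flipCoord_mem hF hx R fun t ht => Set.mem_iUnion.1 ?_
  rw [hunion]
  exact flipCoord_mem_cube_sdiff x (disjoint_right.1 hSR ht) ht

end

theorem stmt16_general (n : ℕ) (S1 S2 : Finset (Fin n)) (a1 a2 : Fin n → Bool)
    (hne : (cube S1 a1 ∩ cube S2 a2).Nonempty) :
    IsLeast {m : ℕ | ∃ F : Fin m → Set (Fin n → Bool),
        (∀ i, IsSubcube (F i)) ∧ (∀ i j, i ≠ j → Disjoint (F i) (F j)) ∧
        (⋃ i, F i) = cube S2 a2 \ cube S1 a1}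
      (S1.card - (S1 ∩ S2).card) := by
  obtain ⟨x, hx1, hx2⟩ := hne
  have hcard : #S1 - #(S1 ∩ S2) = #(S1 \ S2) := by
    rw [← sdiff_inter_self_left, card_sdiff_of_subset inter_subset_left]
  have hdiff : cube S2 a2 \ cube S1 a1 = cube S2 x \ cube (S1 \ S2) x := by
    rw [← cube_eq_of_mem hx1, ← cube_eq_of_mem hx2, ← Set.sdiff_self_inter,
      cube_inter_cube_eq_inter_cube_sdiff, Set.sdiff_self_inter]
  rw [hcard, hdiff]
  exact isLeast_card_partition_cube_sdiff x disjoint_sdiff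

/-- The minimum number of pairwise disjoint subcubes partitioning p2 \ p1 equals k1 - c. -/
theorem stmt16 (n : ℕ) (S1 S2 : Finset (Fin n)) (a1 a2 : Fin n → Bool)
    (hne : (cube S1 a1 ∩ cube S2 a2).Nonempty)
    (hnsub : ¬ cube S2 a2 ⊆ cube S1 a1) :
    IsLeast {m : ℕ | ∃ F : Fin m → Set (Fin n → Bool),
        (∀ i, IsSubcube (F i)) ∧ (∀ i j, i ≠ j → Disjoint (F i) (F j)) ∧
        (⋃ i, F i) = cube S2 a2 \ cube S1 a1}
      (S1.card - (S1 ∩ S2).card) :=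
  stmt16_general n S1 S2 a1 a2 hne
end
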